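/- arXiv:2108.07047 — 5 statements merged into one kernel-verified Lean document; each statement's English description precedes it below -/
import Mathlib

section
/- Let v be a component additive network game and ρ a network formation probability distribution on N. Then the expected wealth 𝔼(v,ρ) = Σ_g ρ(g)·v(g) satisfies 𝔼(v,ρ) = Σ_{h ∈ C(g(ρ))} Σ_{h' ⊆ h} ρ_h(h')·v(h'), where the outer sum is over the components h of the extent g(ρ) and ρ_h is the restriction of ρ to h. -/
open scoped Classical BigOperators

noncomputable section

/-- A link is an unordered pair of two distinct players. -/
abbrev Link (N : Type) [DecidableEq N] := {e : Sym2 N // ¬ e.IsDiag}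

/-- A network is a set of links. -/
abbrev Network (N : Type) [Fintype N] [DecidableEq N] := Finset (Link N)

variable {N : Type} [Fintype N] [DecidableEq N]

/-- The link between two distinct players. -/
def mkLink (i j : N) (h : i ≠ j) : Link N :=
  ⟨s(i, j), by simp only [Sym2.mk_isDiag_iff]; exact h⟩

/-- ρ is a network formation probability distribution. -/
def IsDist (ρ : Network N → ℝ) : Prop :=
  (∀ g, 0 ≤ ρ g) ∧ ∑ g : Network N, ρ g = 1

/-- Restriction of a network formation probability distribution to a network `g`. -/
def restrictDist (ρ : Network N → ℝ) (g : Network N) : Network N → ℝ :=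
  fun h => if h ⊆ g then ∑ h' ∈ gᶜ.powerset, ρ (h ∪ h') else 0

/-- The links of player `i` in network `g`. -/
def playerLinks (i : N) (g : Network N) : Network N :=
  g.filter (fun e => i ∈ (e : Sym2 N))

/-- ρ^{-ij} : removal of the link `e` from the distribution ρ. -/
def linkRemove (ρ : Network N → ℝ) (e : Link N) : Network N → ℝ :=
  restrictDist ρ {e}ᶜ

/-- ρ^{-i} : removal of the player `i` from the distribution ρ. -/
def playerRemove (ρ : Network N → ℝ) (i : N) : Network N → ℝ :=
  restrictDist ρ (playerLinks i Finset.univ)ᶜ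

/-- The extent g(ρ) of ρ : the union of all networks with positive probability. -/
def extent (ρ : Network N → ℝ) : Network N :=
  Finset.univ.filter (fun e => ∃ g : Network N, 0 < ρ g ∧ e ∈ g)

/-- The set N(g) of non-isolated players of a network. -/
def players (g : Network N) : Finset N :=
  Finset.univ.filter (fun i => ∃ e ∈ g, i ∈ (e : Sym2 N))

/-- The simple graph associated with a network. -/
def toGraph (g : Network N) : SimpleGraph N where
  Adj i j := ∃ e ∈ g, (e : Sym2 N) = s(i, j)
  symm := by
    constructor
    rintro i j ⟨e, he, h2⟩
    exact ⟨e, he, by rw [h2, Sym2.eq_swap]⟩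
  loopless := by
    constructor
    rintro i ⟨e, he, h2⟩
    exact e.2 (by rw [h2]; exact Sym2.mk_isDiag_iff.mpr rfl)

/-- Two links lie in the same component of `g`. -/
def sameComp (g : Network N) (e e' : Link N) : Prop :=
  ∃ i ∈ (e : Sym2 N), ∃ j ∈ (e' : Sym2 N), (toGraph g).Reachable i j

/-- The component of `g` containing the link `e`. -/
def linkComponent (g : Network N) (e : Link N) : Network N :=
  g.filter (fun e' => sameComp g e e')

/-- The set C(g) of components of the network `g`. -/
def components (g : Network N) : Finset (Network N) :=
  g.image (linkComponent g)

/-- A network game `v` is component additive. -/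
def CompAdditive (v : Network N → ℝ) : Prop :=
  ∀ g : Network N, v g = ∑ h ∈ components g, v h

/-- Expected wealth 𝔼(v,ρ) of a variable network game. -/
def expWealth (v ρ : Network N → ℝ) : ℝ :=
  ∑ g : Network N, ρ g * v g

/-- The Shapley value of a cooperative game. -/
def shapley (ω : Finset N → ℝ) (i : N) : ℝ :=
  ∑ S ∈ (Finset.univ.erase i).powerset,
    ((S.card.factorial * (Fintype.card N - S.card - 1).factorial : ℝ) /
      (Fintype.card N).factorial) * (ω (insert i S) - ω S)

/-- The restriction g|S of a network to the coalition S. -/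
def netRestrict (g : Network N) (S : Finset N) : Network N :=
  g.filter (fun e => ∀ j ∈ (e : Sym2 N), j ∈ S)

/-- The Myerson Value of a network game. -/
def myerson (v : Network N → ℝ) (g : Network N) (i : N) : ℝ :=
  shapley (fun S => v (netRestrict g S)) i

/-- The Expected Myerson Value of a variable network game. -/
def expectedMyerson (v ρ : Network N → ℝ) (i : N) : ℝ :=
  ∑ g : Network N, ρ g * myerson v g i

/-- The cooperative game ω_{(v,ρ)} associated with a variable network game. -/
def coopGame (v ρ : Network N → ℝ) (S : Finset N) : ℝ :=
  ∑ g : Network N, ρ g * v (netRestrict g S)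

/-!
If `g ⊆ G`, each component of `g` sits inside exactly one component `h` of `G`, where it is a
component of `g ∩ h`; so component additivity gives `v g = ∑_{h ∈ C(G)} v (g ∩ h)`. Every network
of positive probability lies in the extent, hence `𝔼(v,ρ) = ∑_{h ∈ C(g(ρ))} ∑_g ρ(g) v(g ∩ h)`, and
grouping the networks `g` by their trace `h' = g ∩ h` produces exactly the weights `ρ_h(h')`.
-/

section Components

variable {g G : Network N} {e f : Link N} {i j : N}

lemma toGraph_mono : Monotone (toGraph : Network N → SimpleGraph N) :=
  fun _ _ hgG _ _ ⟨e, he, hij⟩ => ⟨e, hgG he, hij⟩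

lemma toGraph_reachable_of_mem (he : e ∈ g) (hi : i ∈ (e : Sym2 N)) (hj : j ∈ (e : Sym2 N)) :
    (toGraph g).Reachable i j := by
  by_cases hij : i = j
  · exact hij ▸ SimpleGraph.Reachable.refl i
  · exact SimpleGraph.Adj.reachable ⟨e, he, (Sym2.mem_and_mem_iff hij).mp ⟨hi, hj⟩⟩

lemma sameComp_refl (e : Link N) : sameComp g e e :=
  ⟨_, Sym2.out_fst_mem _, _, Sym2.out_fst_mem _, SimpleGraph.Reachable.refl _⟩

lemma sameComp.symm (h : sameComp g e f) : sameComp g f e := by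
  obtain ⟨i, hi, j, hj, hij⟩ := h
  exact ⟨j, hj, i, hi, hij.symm⟩

lemma sameComp.trans {f' : Link N} (hf : f ∈ g) (h₁ : sameComp g e f) (h₂ : sameComp g f f') :
    sameComp g e f' := by
  obtain ⟨i, hi, j, hj, hij⟩ := h₁
  obtain ⟨j', hj', k, hk, hjk⟩ := h₂
  exact ⟨i, hi, k, hk, (hij.trans (toGraph_reachable_of_mem hf hj hj')).trans hjk⟩

lemma mem_linkComponent : f ∈ linkComponent g e ↔ f ∈ g ∧ sameComp g e f :=
  Finset.mem_filter

lemma linkComponent_subset (g : Network N) (e : Link N) : linkComponent g e ⊆ g :=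
  Finset.filter_subset _ _

lemma mem_linkComponent_self (he : e ∈ g) : e ∈ linkComponent g e :=
  mem_linkComponent.mpr ⟨he, sameComp_refl e⟩

lemma linkComponent_eq_of_mem (he : e ∈ g) (hf : f ∈ linkComponent g e) :
    linkComponent g f = linkComponent g e := by
  obtain ⟨hf, hef⟩ := mem_linkComponent.mp hf
  ext x
  simp only [mem_linkComponent, and_congr_right_iff]
  exact fun _ => ⟨hef.trans hf, hef.symm.trans he⟩

lemma linkComponent_mono (hgG : g ⊆ G) : linkComponent g e ⊆ linkComponent G e := by
  intro f hf
  obtain ⟨hf, i, hi, j, hj, hij⟩ := mem_linkComponent.mp hf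
  exact mem_linkComponent.mpr ⟨hgG hf, i, hi, j, hj, hij.mono (toGraph_mono hgG)⟩

lemma reachable_linkComponent (hi : i ∈ (e : Sym2 N))
    (hij : (toGraph g).Reachable i j) : (toGraph (linkComponent g e)).Reachable i j := by
  obtain ⟨w⟩ := hij
  suffices ∀ {u w'}, (toGraph g).Walk u w' → (toGraph (linkComponent g e)).Reachable i u →
      (toGraph (linkComponent g e)).Reachable i w' from this w (SimpleGraph.Reachable.refl i)
  intro u w' walk
  induction walk with
  | nil => exact id
  | @cons u u' _ hadj _ ih =>
    intro hiu
    obtain ⟨f, hf, hfu⟩ := hadj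
    have hf' : f ∈ linkComponent g e := mem_linkComponent.mpr
      ⟨hf, i, hi, u, hfu ▸ Sym2.mem_mk_left u u',
        hiu.mono (toGraph_mono (linkComponent_subset g e))⟩
    exact ih (hiu.trans (SimpleGraph.Adj.reachable ⟨f, hf', hfu⟩))

lemma linkComponent_inter_linkComponent (hgG : g ⊆ G) :
    linkComponent (g ∩ linkComponent G e) e = linkComponent g e := by
  refine (linkComponent_mono Finset.inter_subset_left).antisymm fun f hf => ?_
  have hsub : linkComponent g e ⊆ g ∩ linkComponent G e :=
    Finset.subset_inter (linkComponent_subset g e) (linkComponent_mono hgG)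
  obtain ⟨-, i, hi, j, hj, hij⟩ := mem_linkComponent.mp hf
  exact mem_linkComponent.mpr ⟨hsub hf, i, hi, j, hj,
    (reachable_linkComponent hi hij).mono (toGraph_mono hsub)⟩

lemma mem_components : G ∈ components g ↔ ∃ e ∈ g, linkComponent g e = G :=
  Finset.mem_image

lemma components_pairwiseDisjoint (g : Network N) :
    (components g : Set (Network N)).PairwiseDisjoint id := by
  rintro _ h₁ _ h₂ hne
  obtain ⟨e₁, he₁, rfl⟩ := mem_components.mp h₁
  obtain ⟨e₂, he₂, rfl⟩ := mem_components.mp h₂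
  refine Finset.disjoint_left.mpr fun f hf₁ hf₂ => hne ?_
  rw [← linkComponent_eq_of_mem he₁ hf₁, ← linkComponent_eq_of_mem he₂ hf₂]

lemma components_eq_biUnion (hgG : g ⊆ G) :
    components g = (components G).biUnion fun h => components (g ∩ h) := by
  ext c
  simp only [Finset.mem_biUnion, mem_components]
  constructor
  · rintro ⟨e, he, rfl⟩
    exact ⟨_, ⟨e, hgG he, rfl⟩, e, Finset.mem_inter.mpr ⟨he, mem_linkComponent_self (hgG he)⟩,
      linkComponent_inter_linkComponent hgG⟩
  · rintro ⟨_, ⟨e₀, he₀, rfl⟩, e, he, rfl⟩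
    obtain ⟨he, he'⟩ := Finset.mem_inter.mp he
    rw [← linkComponent_eq_of_mem he₀ he']
    exact ⟨e, he, (linkComponent_inter_linkComponent hgG).symm⟩

/-- A component of `g ∩ h` is a nonempty part of `h`, so it determines `h` among the pairwise
disjoint components of `G`. -/
lemma pairwiseDisjoint_components_inter (g G : Network N) :
    (components G : Set (Network N)).PairwiseDisjoint fun h => components (g ∩ h) := by
  intro h₁ hh₁ h₂ hh₂ hne
  refine Finset.disjoint_left.mpr fun c hc₁ hc₂ => ?_
  obtain ⟨e, he, rfl⟩ := mem_components.mp hc₁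
  obtain ⟨e', he', hc₂⟩ := mem_components.mp hc₂
  have hc₂ : e ∈ linkComponent (g ∩ h₂) e' := hc₂ ▸ mem_linkComponent_self he
  exact Finset.disjoint_left.mp (components_pairwiseDisjoint G hh₁ hh₂ hne)
    (Finset.mem_inter.mp he).2 (Finset.mem_inter.mp (linkComponent_subset _ _ hc₂)).2

end Components

lemma CompAdditive.eq_sum_inter_components {v : Network N → ℝ} (hv : CompAdditive v)
    {g G : Network N} (hgG : g ⊆ G) : v g = ∑ h ∈ components G, v (g ∩ h) := by
  rw [hv g, components_eq_biUnion hgG, Finset.sum_biUnion (pairwiseDisjoint_components_inter g G)]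
  exact Finset.sum_congr rfl fun h _ => (hv (g ∩ h)).symm

section Powerset

variable {α : Type*} [Fintype α] [DecidableEq α] {s t u : Finset α}

lemma union_inter_eq_left_of_subset_compl (hs : s ⊆ t) (hu : u ⊆ tᶜ) : (s ∪ u) ∩ t = s := by
  rw [Finset.union_inter_distrib_right, Finset.inter_eq_left.mpr hs,
    Finset.disjoint_iff_inter_eq_empty.mp (Finset.subset_compl_iff_disjoint_right.mp hu),
    Finset.union_empty]

lemma union_sdiff_eq_right_of_subset_compl (hs : s ⊆ t) (hu : u ⊆ tᶜ) : (s ∪ u) \ t = u := by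
  rw [Finset.union_sdiff_distrib, Finset.sdiff_eq_empty_iff_subset.mpr hs,
    Finset.sdiff_eq_self_of_disjoint (Finset.subset_compl_iff_disjoint_right.mp hu),
    Finset.empty_union]

lemma sum_powerset_sum_powerset_compl {M : Type*} [AddCommMonoid M] (t : Finset α)
    (F : Finset α → M) :
    ∑ s ∈ t.powerset, ∑ u ∈ tᶜ.powerset, F (s ∪ u) = ∑ s : Finset α, F s := by
  rw [← Finset.sum_product']
  refine Finset.sum_nbij' (fun p => p.1 ∪ p.2) (fun s => (s ∩ t, s \ t))
    (fun _ _ => Finset.mem_univ _) ?_ ?_ (fun s _ => sup_inf_sdiff s t) fun _ _ => rfl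
  · intro s _
    simp only [Finset.mem_product, Finset.mem_powerset]
    exact ⟨Finset.inter_subset_right,
      Finset.subset_compl_iff_disjoint_right.mpr disjoint_sdiff_self_left⟩
  · rintro ⟨s, u⟩ hsu
    simp only [Finset.mem_product, Finset.mem_powerset] at hsu
    rw [union_inter_eq_left_of_subset_compl hsu.1 hsu.2,
      union_sdiff_eq_right_of_subset_compl hsu.1 hsu.2]

end Powerset

lemma sum_powerset_restrictDist_mul (ρ F : Network N → ℝ) (h : Network N) :
    ∑ h' ∈ h.powerset, restrictDist ρ h h' * F h' = ∑ g : Network N, ρ g * F (g ∩ h) := by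
  rw [← sum_powerset_sum_powerset_compl h]
  refine Finset.sum_congr rfl fun h' hh' => ?_
  rw [Finset.mem_powerset] at hh'
  rw [restrictDist, if_pos hh', Finset.sum_mul]
  refine Finset.sum_congr rfl fun h'' hh'' => ?_
  rw [union_inter_eq_left_of_subset_compl hh' (Finset.mem_powerset.mp hh'')]

lemma subset_extent {ρ : Network N → ℝ} {g : Network N} (hg : 0 < ρ g) : g ⊆ extent ρ :=
  fun e he => Finset.mem_filter.mpr ⟨Finset.mem_univ e, g, hg, he⟩

/-- for component additive v, the expected wealth decomposes over the
components of the extent of ρ. -/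
theorem expWealth_component_decomposition (v ρ : Network N → ℝ)
    (hv : CompAdditive v) (hρ : IsDist ρ) :
    expWealth v ρ =
      ∑ h ∈ components (extent ρ), ∑ h' ∈ h.powerset, restrictDist ρ h h' * v h' := by
  calc expWealth v ρ
      = ∑ g : Network N, ∑ h ∈ components (extent ρ), ρ g * v (g ∩ h) := by
        refine Finset.sum_congr rfl fun g _ => ?_
        rw [← Finset.mul_sum]
        rcases (hρ.1 g).eq_or_lt with hg | hg
        · rw [← hg, zero_mul, zero_mul]
        · rw [← hv.eq_sum_inter_components (subset_extent hg)]
    _ = ∑ h ∈ components (extent ρ), ∑ g : Network N, ρ g * v (g ∩ h) := Finset.sum_comm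
    _ = _ := Finset.sum_congr rfl fun h _ => (sum_powerset_restrictDist_mul ρ v h).symm
end
end

section
/- Let (v,ρ) be a variable network game and i ∈ N a player. Then 𝔼(v, ρ^{-i}) = 𝔼(v,ρ) − Σ_{g : i ∈ N(g)} ρ(g)·Δ_i(v,g), where Δ_i(v,g) = v(g) − v(g \ L_i) is the marginal contribution of player i at g and N(g) is the set of non-isolated players in g. -/
open scoped Classical BigOperators

noncomputable section

variable {N : Type} [Fintype N] [DecidableEq N]

/-! Restricting `ρ` to `s` is its push-forward along `g ↦ g ∩ s`: the networks `h ∪ h'` with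
`h' ⊆ sᶜ` summed in `restrictDist ρ s h` are exactly those meeting `s` in `h`. For `s = L_iᶜ` this
makes `𝔼(v, ρ^{-i})` the `ρ`-average of `v(g \ L_i)`, which can differ from `v(g)` only when `i` is
not isolated in `g`. -/

theorem restrictDist_apply_eq_sum (ρ : Network N → ℝ) (s h : Network N) :
    restrictDist ρ s h = ∑ g ∈ Finset.univ.filter (fun g : Network N => g ∩ s = h), ρ g := by
  unfold restrictDist
  split_ifs with hs
  · refine Finset.sum_nbij' (h ∪ ·) (· \ s) ?_ ?_ ?_ ?_ fun _ _ => rfl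
    · intro h' hh'
      have hdisj : Disjoint h' s := by simpa [Finset.subset_compl_iff_disjoint_right] using hh'
      simp [Finset.union_inter_distrib_right, Finset.disjoint_iff_inter_eq_empty.mp hdisj,
        Finset.inter_eq_left.mpr hs]
    · intro g _
      simp [Finset.sdiff_eq_inter_compl]
    · intro h' hh'
      have hdisj : Disjoint h' s := by simpa [Finset.subset_compl_iff_disjoint_right] using hh'
      simp [Finset.union_sdiff_distrib, Finset.sdiff_eq_empty_iff_subset.mpr hs,
        hdisj.sdiff_eq_left]
    · intro g hg
      have hgs : g ∩ s = h := by simpa using hg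
      rw [← hgs, Finset.union_comm, Finset.sdiff_union_inter]
  · refine (Finset.sum_eq_zero fun g hg => ?_).symm
    have hgs : g ∩ s = h := by simpa using hg
    exact absurd (hgs ▸ Finset.inter_subset_right) hs

theorem expWealth_restrictDist (v ρ : Network N → ℝ) (s : Network N) :
    expWealth v (restrictDist ρ s) = ∑ g : Network N, ρ g * v (g ∩ s) := by
  rw [← Finset.sum_fiberwise Finset.univ (· ∩ s)]
  refine Finset.sum_congr rfl fun h _ => ?_
  rw [restrictDist_apply_eq_sum, Finset.sum_mul]
  refine Finset.sum_congr rfl fun g hg => ?_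
  rw [(Finset.mem_filter.mp hg).2]

theorem expWealth_playerRemove_eq_sum (v ρ : Network N → ℝ) (i : N) :
    expWealth v (playerRemove ρ i) =
      ∑ g : Network N, ρ g * v (g \ playerLinks i Finset.univ) := by
  simp only [playerRemove, expWealth_restrictDist, Finset.sdiff_eq_inter_compl]

theorem sdiff_playerLinks_eq_self {g : Network N} {i : N} (hi : i ∉ players g) :
    g \ playerLinks i Finset.univ = g := by
  refine Finset.sdiff_eq_self_of_disjoint (Finset.disjoint_left.mpr fun e he hei => hi ?_)
  simp only [playerLinks, Finset.mem_filter, Finset.mem_univ, true_and] at hei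
  simp only [players, Finset.mem_filter, Finset.mem_univ, true_and]
  exact ⟨e, he, hei⟩

theorem expWealth_playerRemove_general (v ρ : Network N → ℝ)
    (i : N) :
    expWealth v (playerRemove ρ i) =
      expWealth v ρ -
        ∑ g ∈ Finset.univ.filter (fun g : Network N => i ∈ players g),
          ρ g * (v g - v (g \ playerLinks i Finset.univ)) := by
  have marginal_vanishes_off_players :
      ∀ g ∈ (Finset.univ : Finset (Network N)),
        ρ g * (v g - v (g \ playerLinks i Finset.univ)) ≠ 0 → i ∈ players g := by
    intro g _ hne
    by_contra hi
    simp [sdiff_playerLinks_eq_self hi] at hne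
  rw [Finset.sum_filter_of_ne marginal_vanishes_off_players, expWealth_playerRemove_eq_sum,
    expWealth, ← Finset.sum_sub_distrib]
  exact Finset.sum_congr rfl fun g _ => by ring

/-- marginal contribution of a player to the expected wealth. -/
theorem expWealth_playerRemove (v ρ : Network N → ℝ) (hv : v ∅ = 0) (hρ : IsDist ρ)
    (i : N) :
    expWealth v (playerRemove ρ i) =
      expWealth v ρ -
        ∑ g ∈ Finset.univ.filter (fun g : Network N => i ∈ players g),
          ρ g * (v g - v (g \ playerLinks i Finset.univ)) :=
  expWealth_playerRemove_general v ρ i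
end
end

section
/- The Expected Myerson Value Ψ^m satisfies the equal bargaining power property: for every variable network game (v,ρ) and every link ij in the extent g(ρ), Ψ^m_i(v,ρ) − Ψ^m_i(v,ρ^{-ij}) = Ψ^m_j(v,ρ) − Ψ^m_j(v,ρ^{-ij}). -/
open scoped Classical BigOperators

noncomputable section

variable {N : Type} [Fintype N] [DecidableEq N]

/-!
The Expected Myerson Value is the Shapley value of the coalitional game
`ω_{(v,ρ)}(S) = Σ_g ρ(g) v(g|S)`, and the Shapley value is linear. Removing the link `ij`
from `ρ` does not change `ω_{(v,ρ)}(S)` unless both `i` and `j` belong to `S`, since otherwise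
`ij` is deleted by the restriction to `S` anyway. Hence the difference game vanishes on all
coalitions missing `i` or `j`, so `i` and `j` are symmetric in it, and the Shapley value gives
them equal payoffs.
-/

theorem Finset.sum_univ_eq_sum_powerset_erase {α M : Type*} [Fintype α] [DecidableEq α]
    [AddCommMonoid M] (a : α) (f : Finset α → M) :
    ∑ s, f s = ∑ s ∈ (univ.erase a).powerset, (f s + f (insert a s)) := by
  rw [← powerset_univ, ← insert_erase (mem_univ a), sum_powerset_insert (notMem_erase a _),
    erase_insert (notMem_erase a _), sum_add_distrib]

theorem Finset.map_swap_of_notMem {α : Type*} [DecidableEq α] {i j : α} {s : Finset α}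
    (hi : i ∉ s) (hj : j ∉ s) : s.map (Equiv.swap i j).toEmbedding = s := by
  ext x
  rw [mem_map_equiv, Equiv.symm_swap]
  by_cases hxi : x = i
  · subst hxi; simp [hi, hj]
  by_cases hxj : x = j
  · subst hxj; simp [hi, hj]
  rw [Equiv.swap_apply_of_ne_of_ne hxi hxj]

theorem shapley_sub (ω ω' : Finset N → ℝ) (i : N) :
    shapley (ω - ω') i = shapley ω i - shapley ω' i := by
  rw [shapley, shapley, shapley, ← Finset.sum_sub_distrib]
  exact Finset.sum_congr rfl fun S _ => by simp only [Pi.sub_apply]; ring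

theorem shapley_eq_of_symmetric (ω : Finset N → ℝ) {i j : N}
    (hω : ∀ S, i ∉ S → j ∉ S → ω (insert i S) = ω (insert j S)) :
    shapley ω i = shapley ω j := by
  set σ := (Equiv.swap i j).toEmbedding
  have hσσ : ∀ S : Finset N, (S.map σ).map σ = S := fun S => by
    ext x; simp [σ, Finset.mem_map_equiv]
  unfold shapley
  refine Finset.sum_nbij' (·.map σ) (·.map σ) ?_ ?_ (fun S _ => hσσ S) (fun S _ => hσσ S) ?_
  · intro S hS
    simp_all [σ, Finset.subset_erase, Finset.mem_map_equiv]
  · intro S hS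
    simp_all [σ, Finset.subset_erase, Finset.mem_map_equiv]
  intro S hS
  have hiS : i ∉ S := (Finset.subset_erase.mp (Finset.mem_powerset.mp hS)).2
  rw [Finset.card_map]
  congr 1
  by_cases hjS : j ∈ S
  · obtain ⟨U, hjU, rfl⟩ : ∃ U, j ∉ U ∧ S = insert j U :=
      ⟨S.erase j, Finset.notMem_erase j S, (Finset.insert_erase hjS).symm⟩
    have hiU : i ∉ U := fun h => hiS (Finset.mem_insert_of_mem h)
    rw [Finset.map_insert, Finset.map_swap_of_notMem hiU hjU]
    simp only [σ, Equiv.coe_toEmbedding, Equiv.swap_apply_right]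
    rw [Finset.insert_comm, hω U hiU hjU]
  · rw [Finset.map_swap_of_notMem hiS hjS, hω S hiS hjS]

theorem linkRemove_apply_of_notMem (ρ : Network N → ℝ) {e : Link N} {g : Network N}
    (he : e ∉ g) : linkRemove ρ e g = ρ g + ρ (insert e g) := by
  have hg : g ⊆ {e}ᶜ := fun x hx => Finset.mem_compl.mpr fun h =>
    he (Finset.mem_singleton.mp h ▸ hx)
  rw [linkRemove, restrictDist, if_pos hg, compl_compl, ← Finset.insert_empty,
    Finset.sum_powerset_insert (Finset.notMem_empty e), Finset.powerset_empty,
    Finset.sum_singleton, Finset.sum_singleton, Finset.union_empty, Finset.union_insert,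
    Finset.union_empty]

theorem linkRemove_apply_of_mem (ρ : Network N → ℝ) {e : Link N} {g : Network N}
    (he : e ∈ g) : linkRemove ρ e g = 0 :=
  if_neg fun h => Finset.mem_compl.mp (h he) (Finset.mem_singleton_self e)

theorem sum_linkRemove_mul (ρ f : Network N → ℝ) (e : Link N) :
    ∑ g, linkRemove ρ e g * f g = ∑ g, ρ g * f (g.erase e) := by
  rw [Finset.sum_univ_eq_sum_powerset_erase e, Finset.sum_univ_eq_sum_powerset_erase e]
  refine Finset.sum_congr rfl fun g hg => ?_
  have he : e ∉ g := (Finset.subset_erase.mp (Finset.mem_powerset.mp hg)).2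
  rw [linkRemove_apply_of_notMem ρ he, linkRemove_apply_of_mem ρ (Finset.mem_insert_self e g),
    Finset.erase_insert he, Finset.erase_eq_of_notMem he]
  ring

theorem netRestrict_erase_of_notMem {g : Network N} {S : Finset N} {e : Link N} {k : N}
    (hk : k ∈ (e : Sym2 N)) (hkS : k ∉ S) : netRestrict (g.erase e) S = netRestrict g S := by
  have he : e ∉ netRestrict g S := fun h => hkS ((Finset.mem_filter.mp h).2 k hk)
  rw [netRestrict, Finset.filter_erase]
  exact Finset.erase_eq_of_notMem he

theorem coopGame_linkRemove_of_notMem (v ρ : Network N → ℝ) {S : Finset N} {e : Link N} {k : N}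
    (hk : k ∈ (e : Sym2 N)) (hkS : k ∉ S) : coopGame v (linkRemove ρ e) S = coopGame v ρ S := by
  rw [coopGame, coopGame, sum_linkRemove_mul ρ (fun g => v (netRestrict g S))]
  simp only [netRestrict_erase_of_notMem hk hkS]

theorem expectedMyerson_eq_shapley_coopGame (v ρ : Network N → ℝ) (i : N) :
    expectedMyerson v ρ i = shapley (coopGame v ρ) i := by
  simp only [expectedMyerson, myerson, shapley, coopGame, Finset.mul_sum, ← Finset.sum_sub_distrib]
  rw [Finset.sum_comm]
  exact Finset.sum_congr rfl fun S _ => Finset.sum_congr rfl fun g _ => by ring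

theorem expectedMyerson_equalBargainingPower_general (v ρ : Network N → ℝ) (i j : N) (hij : i ≠ j) :
    expectedMyerson v ρ i - expectedMyerson v (linkRemove ρ (mkLink i j hij)) i =
      expectedMyerson v ρ j - expectedMyerson v (linkRemove ρ (mkLink i j hij)) j := by
  simp only [expectedMyerson_eq_shapley_coopGame, ← shapley_sub]
  refine shapley_eq_of_symmetric _ fun S hiS hjS => ?_
  have hj : j ∈ (mkLink i j hij : Sym2 N) := Sym2.mem_mk_right i j
  have hi : i ∈ (mkLink i j hij : Sym2 N) := Sym2.mem_mk_left i j
  simp only [Pi.sub_apply,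
    coopGame_linkRemove_of_notMem v ρ hj (by simp [hij.symm, hjS] : j ∉ insert i S),
    coopGame_linkRemove_of_notMem v ρ hi (by simp [hij, hiS] : i ∉ insert j S), sub_self]

/-- the Expected Myerson Value satisfies the equal bargaining power
property. -/
theorem expectedMyerson_equalBargainingPower (v ρ : Network N → ℝ) (hv : v ∅ = 0)
    (hρ : IsDist ρ) (i j : N) (hij : i ≠ j) (he : mkLink i j hij ∈ extent ρ) :
    expectedMyerson v ρ i - expectedMyerson v (linkRemove ρ (mkLink i j hij)) i =
      expectedMyerson v ρ j - expectedMyerson v (linkRemove ρ (mkLink i j hij)) j :=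
  expectedMyerson_equalBargainingPower_general v ρ i j hij
end
end

section
/- Suppose Y^m satisfies the balanced contributions property on network games: Y^m_i(v,g) − Y^m_i(v, g \ L_j) = Y^m_j(v,g) − Y^m_j(v, g \ L_i) for all g and i ≠ j. Then the Expected Myerson Value satisfies the balanced contributions property on variable network games: Ψ^m_i(v,ρ) − Ψ^m_i(v,ρ^{-j}) = Ψ^m_j(v,ρ) − Ψ^m_j(v,ρ^{-i}) for all (v,ρ) and i ≠ j, where Ψ^m(v,ρ) = Σ_g ρ(g)·Y^m(v,g). Key identity: Ψ^m_i(v,ρ) − Ψ^m_i(v,ρ^{-j}) = Σ_{g ⊆ g(ρ)} ρ(g)·(Y^m_i(v,g) − Y^m_i(v, g \ L_j(g))). -/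
open scoped Classical BigOperators

noncomputable section

variable {N : Type} [Fintype N] [DecidableEq N]

/-! The distribution `ρ^{-j}` is the image of `ρ` under `g ↦ g \ L_j`, so the expectation of
`Y(v, ·)` under `ρ^{-j}` is the `ρ`-expectation of `Y(v, · \ L_j)`. The difference of the two
expectations is then, network by network, the balanced-contributions difference of `Y`. -/

lemma restrictDist_eq_sum_fiber (ρ : Network N → ℝ) (G h : Network N) :
    restrictDist ρ G h = ∑ g with g ∩ G = h, ρ g := by
  unfold restrictDist
  split_ifs with hG
  · refine Finset.sum_nbij' (h ∪ ·) (· \ G) (fun h' hh' => ?_) (fun g _ => by simp)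
      (fun h' hh' => ?_) (fun g hg => ?_) (fun _ _ => rfl)
    · have hdisj : Disjoint h' G := by simpa [Finset.subset_compl_iff_disjoint_right] using hh'
      simp only [Finset.mem_filter, Finset.mem_univ, true_and]
      rw [Finset.union_inter_distrib_right, Finset.inter_eq_left.mpr hG,
        Finset.disjoint_iff_inter_eq_empty.mp hdisj, Finset.union_empty]
    · have hdisj : Disjoint h' G := by simpa [Finset.subset_compl_iff_disjoint_right] using hh'
      rw [Finset.union_sdiff_distrib, Finset.sdiff_eq_empty_iff_subset.mpr hG, Finset.empty_union,
        Finset.sdiff_eq_self_iff_disjoint.mpr hdisj]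
    · rw [← (Finset.mem_filter.mp hg).2, Finset.union_comm, Finset.sdiff_union_inter]
  · refine (Finset.sum_eq_zero fun g hg => ?_).symm
    exact absurd ((Finset.mem_filter.mp hg).2 ▸ Finset.inter_subset_right) hG

lemma sum_restrictDist_mul (ρ f : Network N → ℝ) (G : Network N) :
    ∑ h, restrictDist ρ G h * f h = ∑ g, ρ g * f (g ∩ G) := by
  rw [← Finset.sum_fiberwise Finset.univ (· ∩ G) (fun g => ρ g * f (g ∩ G))]
  refine Finset.sum_congr rfl fun h _ => ?_
  rw [restrictDist_eq_sum_fiber, Finset.sum_mul]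
  refine Finset.sum_congr rfl fun g hg => ?_
  rw [(Finset.mem_filter.mp hg).2]

lemma sum_playerRemove_mul (ρ f : Network N → ℝ) (j : N) :
    ∑ g, playerRemove ρ j g * f g = ∑ g, ρ g * f (g \ playerLinks j Finset.univ) := by
  simp only [playerRemove, sum_restrictDist_mul, Finset.sdiff_eq_inter_compl]

theorem standardExtension_balancedContributions_general
    (Ym : (Network N → ℝ) → Network N → N → ℝ)
    (hYm : ∀ (v : Network N → ℝ) (g : Network N) (i j : N), i ≠ j →
      Ym v g i - Ym v (g \ playerLinks j Finset.univ) i =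
        Ym v g j - Ym v (g \ playerLinks i Finset.univ) j)
    (v ρ : Network N → ℝ) (i j : N) (hij : i ≠ j) :
    (∑ g : Network N, ρ g * Ym v g i) - (∑ g : Network N, playerRemove ρ j g * Ym v g i) =
      (∑ g : Network N, ρ g * Ym v g j) -
        (∑ g : Network N, playerRemove ρ i g * Ym v g j) := by
  simp only [sum_playerRemove_mul, ← Finset.sum_sub_distrib, ← mul_sub, hYm v _ i j hij]

/-- if Y^m satisfies the balanced contributions property on network
games, then its standard extension satisfies the balanced contributions property on
variable network games. -/
theorem standardExtension_balancedContributions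
    (Ym : (Network N → ℝ) → Network N → N → ℝ)
    (hYm : ∀ (v : Network N → ℝ) (g : Network N) (i j : N), i ≠ j →
      Ym v g i - Ym v (g \ playerLinks j Finset.univ) i =
        Ym v g j - Ym v (g \ playerLinks i Finset.univ) j)
    (v ρ : Network N → ℝ) (hv : v ∅ = 0) (hρ : IsDist ρ) (i j : N) (hij : i ≠ j) :
    (∑ g : Network N, ρ g * Ym v g i) - (∑ g : Network N, playerRemove ρ j g * Ym v g i) =
      (∑ g : Network N, ρ g * Ym v g j) -
        (∑ g : Network N, playerRemove ρ i g * Ym v g j) :=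
  standardExtension_balancedContributions_general Ym hYm v ρ i j hij
end
end

section
/- Uniqueness for Axiomatization I: if Ψ¹ and Ψ² are allocation rules on variable network games (with Ψ_i(v,ρ) = 0 for players isolated in the extent g(ρ)) that both satisfy component balance and the equal bargaining power property, then Ψ¹(v,ρ) = Ψ²(v,ρ) for every component additive network game v and every network formation probability distribution ρ. -/
open scoped Classical BigOperators

noncomputable section

variable {N : Type} [Fintype N] [DecidableEq N]

/-! The difference `Ψ₁ v · - Ψ₂ v ·` satisfies the homogeneous versions of the axioms: it
vanishes off the extent, sums to zero over the players of each component, and changes by the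
same amount at both ends of a link `ij` when `ij` is removed. Removing a link shrinks the extent,
so by strong induction on its size the difference vanishes at `ρ^{-ij}`; hence at `ρ` it is
constant along links, so constant on each component, and a constant with zero sum over a
nonempty set is zero. -/

theorem restrictDist_eq_sum_filter (ρ : Network N → ℝ) (g h : Network N) :
    restrictDist ρ g h = ∑ k with k ∩ g = h, ρ k := by
  unfold restrictDist
  split_ifs with hhg
  · refine Finset.sum_nbij' (h ∪ ·) (· \ g) (fun h' hh' => ?_) (fun k _ => ?_)
      (fun h' hh' => ?_) (fun k hk => ?_) (fun _ _ => rfl) <;>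
      simp only [Finset.mem_powerset, Finset.subset_compl_iff_disjoint_right,
        Finset.mem_filter, Finset.mem_univ, true_and] at *
    · rw [Finset.union_inter_distrib_right, Finset.inter_eq_left.2 hhg,
        Finset.disjoint_iff_inter_eq_empty.1 hh', Finset.union_empty]
    · exact Finset.sdiff_disjoint
    · rw [Finset.union_sdiff_distrib, Finset.sdiff_eq_empty_iff_subset.2 hhg,
        Finset.empty_union, Finset.sdiff_eq_self_of_disjoint hh']
    · rw [← hk, Finset.union_comm, Finset.sdiff_union_inter]
  · refine (Finset.sum_eq_zero fun k hk => ?_).symm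
    rw [Finset.mem_filter] at hk
    exact absurd (hk.2 ▸ Finset.inter_subset_right) hhg

theorem IsDist.restrictDist {ρ : Network N → ℝ} (hρ : IsDist ρ) (g : Network N) :
    IsDist (restrictDist ρ g) := by
  refine ⟨fun h => ?_, ?_⟩
  · rw [restrictDist_eq_sum_filter]
    exact Finset.sum_nonneg fun k _ => hρ.1 k
  · simp_rw [restrictDist_eq_sum_filter]
    rw [Finset.sum_fiberwise]
    exact hρ.2

theorem extent_restrictDist {ρ : Network N → ℝ} (hρ : ∀ g, 0 ≤ ρ g) (g : Network N) :
    extent (restrictDist ρ g) = extent ρ ∩ g := by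
  ext e
  simp only [extent, restrictDist_eq_sum_filter, Finset.mem_inter, Finset.mem_filter,
    Finset.mem_univ, true_and, Finset.sum_pos_iff_of_nonneg fun k _ => hρ k]
  constructor
  · rintro ⟨_, ⟨k, rfl, hk⟩, he⟩
    exact ⟨⟨k, hk, (Finset.mem_inter.1 he).1⟩, (Finset.mem_inter.1 he).2⟩
  · rintro ⟨⟨k, hk, he⟩, heg⟩
    exact ⟨k ∩ g, ⟨k, rfl, hk⟩, Finset.mem_inter.2 ⟨he, heg⟩⟩

theorem extent_linkRemove {ρ : Network N → ℝ} (hρ : ∀ g, 0 ≤ ρ g) (e : Link N) :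
    extent (linkRemove ρ e) = (extent ρ).erase e := by
  rw [linkRemove, extent_restrictDist hρ, ← Finset.sdiff_eq_inter_compl,
    Finset.sdiff_singleton_eq_erase]

theorem SimpleGraph.Reachable.apply_eq {V α : Type*} {G : SimpleGraph V} {f : V → α}
    (hf : ∀ a b, G.Adj a b → f a = f b) {a b : V} (h : G.Reachable a b) : f a = f b := by
  obtain ⟨w⟩ := h
  induction w with
  | nil => rfl
  | cons hadj _ ih => exact (hf _ _ hadj).trans ih

theorem toGraph_adj_iff {g : Network N} {a b : N} :
    (toGraph g).Adj a b ↔ ∃ hab : a ≠ b, mkLink a b hab ∈ g := by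
  constructor
  · rintro ⟨e, he, hab⟩
    have hne : a ≠ b := fun h => e.2 (by rw [hab, h]; exact Sym2.mk_isDiag_iff.2 rfl)
    exact ⟨hne, (Subtype.ext hab.symm : mkLink a b hne = e) ▸ he⟩
  · rintro ⟨_, h⟩
    exact ⟨_, h, rfl⟩

theorem toGraph_reachable_of_mem_s16 {g : Network N} {e : Link N} (he : e ∈ g) {a b : N}
    (ha : a ∈ (e : Sym2 N)) (hb : b ∈ (e : Sym2 N)) : (toGraph g).Reachable a b := by
  by_cases hab : a = b
  · exact hab ▸ SimpleGraph.Reachable.refl a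
  · exact SimpleGraph.Adj.reachable ⟨e, he, (Sym2.mem_and_mem_iff hab).1 ⟨ha, hb⟩⟩

theorem mem_players_iff {g : Network N} {i : N} :
    i ∈ players g ↔ ∃ e ∈ g, i ∈ (e : Sym2 N) := by
  simp [players]

theorem exists_mem_components_forall_reachable {g : Network N} {i : N} (hi : i ∈ players g) :
    ∃ h ∈ components g, i ∈ players h ∧ ∀ a ∈ players h, (toGraph g).Reachable a i := by
  obtain ⟨e, he, hie⟩ := mem_players_iff.1 hi
  refine ⟨linkComponent g e, Finset.mem_image_of_mem _ he, ?_, fun a ha => ?_⟩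
  · exact mem_players_iff.2 ⟨e, Finset.mem_filter.2 ⟨he, i, hie, i, hie, .rfl⟩, hie⟩
  · obtain ⟨e', he', hae'⟩ := mem_players_iff.1 ha
    obtain ⟨he'g, x, hxe, y, hye', hxy⟩ := Finset.mem_filter.1 he'
    exact ((toGraph_reachable_of_mem_s16 he'g hae' hye').trans hxy.symm).trans
      (toGraph_reachable_of_mem_s16 he hxe hie)

theorem eq_zero_of_forall_adj_of_sum_components {M : Type*} [AddCommMonoid M]
    [IsAddTorsionFree M] {g : Network N} {f : N → M}
    (hadj : ∀ a b, (toGraph g).Adj a b → f a = f b)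
    (hsum : ∀ h ∈ components g, ∑ i ∈ players h, f i = 0) {i : N} (hi : i ∈ players g) :
    f i = 0 := by
  obtain ⟨h, hh, hih, hreach⟩ := exists_mem_components_forall_reachable hi
  have hconst : ∑ a ∈ players h, f a = (players h).card • f i :=
    (Finset.sum_congr rfl fun a ha => (hreach a ha).apply_eq hadj).trans (Finset.sum_const _)
  rw [← nsmul_eq_zero_iff_right (Finset.card_ne_zero_of_mem hih), ← hconst, hsum h hh]

theorem eq_zero_of_componentBalance_of_equalBargainingPower {M : Type*} [AddCommGroup M]
    [IsAddTorsionFree M] (D : (Network N → ℝ) → N → M)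
    (hiso : ∀ ρ, IsDist ρ → ∀ i, i ∉ players (extent ρ) → D ρ i = 0)
    (hcb : ∀ ρ, IsDist ρ → ∀ h ∈ components (extent ρ), ∑ i ∈ players h, D ρ i = 0)
    (hebp : ∀ ρ, IsDist ρ → ∀ (i j : N) (hij : i ≠ j), mkLink i j hij ∈ extent ρ →
      D ρ i - D (linkRemove ρ (mkLink i j hij)) i = D ρ j - D (linkRemove ρ (mkLink i j hij)) j)
    {ρ : Network N → ℝ} (hρ : IsDist ρ) (i : N) : D ρ i = 0 := by
  induction hn : (extent ρ).card using Nat.strong_induction_on generalizing ρ i with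
  | _ n ih =>
    by_cases hi : i ∈ players (extent ρ)
    · refine eq_zero_of_forall_adj_of_sum_components (fun a b hadj => ?_) (hcb ρ hρ) hi
      obtain ⟨hab, he⟩ := toGraph_adj_iff.1 hadj
      have hρ' : IsDist (linkRemove ρ (mkLink a b hab)) := hρ.restrictDist _
      have hcard : (extent (linkRemove ρ (mkLink a b hab))).card < n := by
        rw [extent_linkRemove hρ.1, ← hn]
        exact Finset.card_erase_lt_of_mem he
      have h := hebp ρ hρ a b hab he
      rwa [ih _ hcard hρ' a rfl, ih _ hcard hρ' b rfl, sub_zero, sub_zero] at h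
    · exact hiso ρ hρ i hi

/-- uniqueness for Axiomatization I: two allocation rules on variable
network games satisfying component balance and equal bargaining power coincide on
component additive variable network games. -/
theorem uniqueness_axiomatizationI
    (Ψ₁ Ψ₂ : (Network N → ℝ) → (Network N → ℝ) → N → ℝ)
    (h₁iso : ∀ (v ρ : Network N → ℝ), v ∅ = 0 → IsDist ρ →
      ∀ i : N, i ∉ players (extent ρ) → Ψ₁ v ρ i = 0)
    (h₂iso : ∀ (v ρ : Network N → ℝ), v ∅ = 0 → IsDist ρ →
      ∀ i : N, i ∉ players (extent ρ) → Ψ₂ v ρ i = 0)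
    (h₁cb : ∀ (v ρ : Network N → ℝ), CompAdditive v → IsDist ρ →
      ∀ h ∈ components (extent ρ),
        ∑ i ∈ players h, Ψ₁ v ρ i = ∑ g : Network N, ρ g * v (g ∩ h))
    (h₂cb : ∀ (v ρ : Network N → ℝ), CompAdditive v → IsDist ρ →
      ∀ h ∈ components (extent ρ),
        ∑ i ∈ players h, Ψ₂ v ρ i = ∑ g : Network N, ρ g * v (g ∩ h))
    (h₁ebp : ∀ (v ρ : Network N → ℝ), v ∅ = 0 → IsDist ρ →
      ∀ (i j : N) (hij : i ≠ j), mkLink i j hij ∈ extent ρ →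
        Ψ₁ v ρ i - Ψ₁ v (linkRemove ρ (mkLink i j hij)) i =
          Ψ₁ v ρ j - Ψ₁ v (linkRemove ρ (mkLink i j hij)) j)
    (h₂ebp : ∀ (v ρ : Network N → ℝ), v ∅ = 0 → IsDist ρ →
      ∀ (i j : N) (hij : i ≠ j), mkLink i j hij ∈ extent ρ →
        Ψ₂ v ρ i - Ψ₂ v (linkRemove ρ (mkLink i j hij)) i =
          Ψ₂ v ρ j - Ψ₂ v (linkRemove ρ (mkLink i j hij)) j)
    (v ρ : Network N → ℝ) (hv : CompAdditive v) (hv0 : v ∅ = 0) (hρ : IsDist ρ)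
    (i : N) :
    Ψ₁ v ρ i = Ψ₂ v ρ i := by
  refine sub_eq_zero.1 <|
    eq_zero_of_componentBalance_of_equalBargainingPower (fun ρ i => Ψ₁ v ρ i - Ψ₂ v ρ i)
      (fun ρ hρ i hi => ?_) (fun ρ hρ h hh => ?_) (fun ρ hρ a b hab he => ?_) hρ i
  · rw [h₁iso v ρ hv0 hρ i hi, h₂iso v ρ hv0 hρ i hi, sub_self]
  · rw [Finset.sum_sub_distrib, h₁cb v ρ hv hρ h hh, h₂cb v ρ hv hρ h hh, sub_self]
  · linear_combination h₁ebp v ρ hv0 hρ a b hab he - h₂ebp v ρ hv0 hρ a b hab he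
end
end
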